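/- Let K be a Euclidean cubical complex in ℝⁿ, let σ be a cube of K, and let τ, v be vertices of σ with τ ⪯ v, v ≠ τ, and τ ≠ min σ. Suppose τ is a free face of σ and let K' be the (τ, σ)-collapse of K. Then: (a) v − τ and v − min σ belong to pastlk(K, v), and every j ∈ pastlk(K, v) with v − τ ⪯ j satisfies j ⪯ v − min σ (so v − τ is a free face of the simplicial complex pastlk(K, v) whose unique maximal proper coface is v − min σ); and (b) pastlk(K', v) = pastlk(K, v) ∖ { j ∈ {0,1}ⁿ ∖ {0} : v − τ ⪯ j ⪯ v − min σ }, i.e., pastlk(K', v) is the (v − τ)-collapse of pastlk(K, v) in the simplicial setting. -/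

import Mathlib

open Set

namespace DCC

/-- The real point corresponding to an integer point of `ℤⁿ`. -/
def toR {n : ℕ} (v : Fin n → ℤ) : Fin n → ℝ := fun i => (v i : ℝ)

/-- `j ∈ {0,1}ⁿ`: every coordinate of `j` is `0` or `1`. -/
def IsBinary {n : ℕ} (j : Fin n → ℤ) : Prop := ∀ i, j i = 0 ∨ j i = 1

/-- The elementary cube `[v - j, v] = {x : v - j ⪯ x ⪯ v}` in `ℝⁿ`. -/
def cube {n : ℕ} (v j : Fin n → ℤ) : Set (Fin n → ℝ) := Set.Icc (toR (v - j)) (toR v)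

/-- A subset of `ℝⁿ` which is an elementary cube. -/
def IsElemCube {n : ℕ} (σ : Set (Fin n → ℝ)) : Prop := ∃ v j, IsBinary j ∧ σ = cube v j

/-- A Euclidean cubical complex: a finite union of elementary cubes. -/
def IsComplex {n : ℕ} (K : Set (Fin n → ℝ)) : Prop :=
  ∃ C : Finset ((Fin n → ℤ) × (Fin n → ℤ)),
    (∀ c ∈ C, IsBinary c.2) ∧ K = ⋃ c ∈ C, cube c.1 c.2

/-- The past link of `v` in `K`: all nonzero binary `j` with `[v - j, v] ⊆ K`. -/
def pastlk {n : ℕ} (K : Set (Fin n → ℝ)) (v : Fin n → ℤ) : Set (Fin n → ℤ) :=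
  {j | IsBinary j ∧ j ≠ 0 ∧ cube v j ⊆ K}

/-- A maximal cube of `K`: a cube of `K` not properly contained in another cube of `K`. -/
def IsMaximalCube {n : ℕ} (K σ : Set (Fin n → ℝ)) : Prop :=
  IsElemCube σ ∧ σ ⊆ K ∧ ∀ γ, IsElemCube γ → γ ⊆ K → σ ⊆ γ → γ = σ

/-- `τ` is a free face of the maximal cube `σ` in `K`: `τ` is a proper face of `σ` and
`σ` is the unique maximal cube of `K` containing `τ`. -/
def IsFreeFace {n : ℕ} (K τ σ : Set (Fin n → ℝ)) : Prop :=
  IsElemCube τ ∧ τ ⊂ σ ∧ IsMaximalCube K σ ∧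
    ∀ γ, IsMaximalCube K γ → τ ⊆ γ → γ = σ

/-- The `(τ, σ)`-collapse of `K`: the union of all cubes of `K` that do not contain `τ`. -/
def collapse {n : ℕ} (K τ : Set (Fin n → ℝ)) : Set (Fin n → ℝ) :=
  ⋃₀ {γ | IsElemCube γ ∧ γ ⊆ K ∧ ¬ τ ⊆ γ}

/-- The restriction `K|_σ` where `σ` has minimum vertex `a` and maximum vertex `b`:
the union of all cubes `γ` of `K` with `a ⪯ min γ` and `max γ ⪯ b`. -/
def restrict {n : ℕ} (K : Set (Fin n → ℝ)) (a b : Fin n → ℤ) : Set (Fin n → ℝ) :=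
  ⋃₀ {γ | ∃ v j, IsBinary j ∧ γ = cube v j ∧ cube v j ⊆ K ∧ a ≤ v - j ∧ v ≤ b}

/-- The geometric realization of the past link of `v` in `K`, as a subset of `ℝⁿ`:
the union over `j ∈ pastlk K v` of the convex hulls of `{v - eᵢ : jᵢ = 1}`. -/
def geomReal {n : ℕ} (K : Set (Fin n → ℝ)) (v : Fin n → ℤ) : Set (Fin n → ℝ) :=
  ⋃ j ∈ pastlk K v, convexHull ℝ ((fun i => toR v - Pi.single i (1 : ℝ)) '' {i | j i = 1})

/-- The space of dipaths in `K` from `p` to `q`, as a subspace of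
`C([0,1], ℝⁿ)` with the compact-open topology. -/
def DipathSpace {n : ℕ} (K : Set (Fin n → ℝ)) (p q : Fin n → ℝ) :
    Set C(unitInterval, Fin n → ℝ) :=
  {γ | (∀ t, γ t ∈ K) ∧ γ 0 = p ∧ γ 1 = q ∧ Monotone ⇑γ}

/-- The reachable complex `R(K, p)`: points of `K` reachable from `p` by a dipath in `K`. -/
def reach {n : ℕ} (K : Set (Fin n → ℝ)) (p : Fin n → ℝ) : Set (Fin n → ℝ) :=
  {q ∈ K | (DipathSpace K p q).Nonempty}

/-- `(τ, σ)` is an LPDC pair in `K` (where `K'` is the `(τ,σ)`-collapse of `K`):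
for every vertex `v` of `K'`, the geometric realizations of the past links of `v`
in `K` and in `K'` are homotopy equivalent. -/
def IsLPDCPair {n : ℕ} (K τ : Set (Fin n → ℝ)) : Prop :=
  ∀ v : Fin n → ℤ, toR v ∈ collapse K τ →
    Nonempty (ContinuousMap.HomotopyEquiv ↥(geomReal K v) ↥(geomReal (collapse K τ) v))



/-!
A cube `[v - j, v]` of `K` contains the vertex `τ` exactly when `v - τ ⪯ j`. Every cube of `K`
lies in a maximal one (only finitely many elementary cubes contain a given one), so when `τ` is
a free face of `σ` every cube of `K` through `τ` lies in `σ`; for `[v - j, v]` this means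
`j ⪯ v - min σ`. The collapse keeps exactly the cubes of `K` that avoid `τ`, so the past link
of `v` loses exactly the `j` with `v - τ ⪯ j`.
-/

section Cubes

variable {n : ℕ}

lemma toR_le_toR {a b : Fin n → ℤ} : toR a ≤ toR b ↔ a ≤ b := by
  simp [toR, Pi.le_def]

lemma toR_mem_cube {a v j : Fin n → ℤ} : toR a ∈ cube v j ↔ v - j ≤ a ∧ a ≤ v := by
  simp [cube, toR_le_toR]

lemma isBinary_iff {j : Fin n → ℤ} : IsBinary j ↔ 0 ≤ j ∧ j ≤ 1 := by
  simp only [IsBinary, Pi.le_def, Pi.zero_apply, Pi.one_apply, ← forall_and]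
  exact forall_congr' fun i => by omega

lemma cube_zero (τ : Fin n → ℤ) : cube τ 0 = {toR τ} := by
  simp [cube]

lemma cube_zero_subset_iff {τ : Fin n → ℤ} {γ : Set (Fin n → ℝ)} :
    cube τ 0 ⊆ γ ↔ toR τ ∈ γ := by
  rw [cube_zero, singleton_subset_iff]

lemma cube_subset_cube_iff {v j w k : Fin n → ℤ} (hj : 0 ≤ j) :
    cube v j ⊆ cube w k ↔ w - k ≤ v - j ∧ v ≤ w := by
  rw [cube, cube, Icc_subset_Icc_iff (toR_le_toR.2 (sub_le_self v hj)), toR_le_toR, toR_le_toR]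

lemma finite_setOf_isElemCube_superset {w k : Fin n → ℤ} (hk : 0 ≤ k) :
    {δ | IsElemCube δ ∧ cube w k ⊆ δ}.Finite := by
  refine (((finite_Icc w (w - k + 1)).prod (finite_Icc 0 1)).image
    fun p => cube p.1 p.2).subset ?_
  rintro δ ⟨⟨u, l, hl, rfl⟩, hwk⟩
  rw [cube_subset_cube_iff hk] at hwk
  obtain ⟨hl0, hl1⟩ := isBinary_iff.1 hl
  refine ⟨(u, l), ⟨⟨hwk.2, fun i => ?_⟩, hl0, hl1⟩, rfl⟩
  have := hwk.1 i
  have := hl1 i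
  simp only [Pi.sub_apply, Pi.add_apply, Pi.one_apply] at *
  omega

lemma exists_isMaximalCube_superset {K γ : Set (Fin n → ℝ)} (hγ : IsElemCube γ) (hγK : γ ⊆ K) :
    ∃ μ, IsMaximalCube K μ ∧ γ ⊆ μ := by
  obtain ⟨w, k, hk, rfl⟩ := hγ
  set S := {δ | IsElemCube δ ∧ δ ⊆ K ∧ cube w k ⊆ δ}
  have hS : S.Finite := (finite_setOf_isElemCube_superset (isBinary_iff.1 hk).1).subset
    fun δ hδ => ⟨hδ.1, hδ.2.2⟩
  obtain ⟨μ, ⟨hμ, hμK, hwkμ⟩, hmax⟩ :=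
    hS.exists_maximalFor id S ⟨cube w k, ⟨w, k, hk, rfl⟩, hγK, subset_rfl⟩
  exact ⟨μ, ⟨hμ, hμK, fun δ hδ hδK hμδ =>
    (hmax ⟨hδ, hδK, hwkμ.trans hμδ⟩ hμδ).antisymm hμδ⟩, hwkμ⟩

lemma IsFreeFace.subset_of_subset {K τ σ γ : Set (Fin n → ℝ)} (hfree : IsFreeFace K τ σ)
    (hγ : IsElemCube γ) (hγK : γ ⊆ K) (hτγ : τ ⊆ γ) : γ ⊆ σ := by
  obtain ⟨μ, hμ, hγμ⟩ := exists_isMaximalCube_superset hγ hγK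
  exact hfree.2.2.2 μ hμ (hτγ.trans hγμ) ▸ hγμ

end Cubes

section PastLink

variable {n : ℕ} {K : Set (Fin n → ℝ)}

lemma sub_mem_pastlk {w k a v : Fin n → ℤ} (hk : IsBinary k) (hK : cube w k ⊆ K)
    (hwa : w - k ≤ a) (hav : a ≤ v) (hvw : v ≤ w) (hva : v ≠ a) : v - a ∈ pastlk K v := by
  have hbin : IsBinary (v - a) := by
    refine isBinary_iff.2 ⟨sub_nonneg.2 hav, fun i => ?_⟩
    have := hwa i
    have := hvw i
    have := (isBinary_iff.1 hk).2 i
    simp only [Pi.sub_apply, Pi.one_apply] at *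
    omega
  refine ⟨hbin, sub_ne_zero.2 hva, subset_trans ?_ hK⟩
  rw [cube_subset_cube_iff (sub_nonneg.2 hav), sub_sub_cancel]
  exact ⟨hwa, hvw⟩

lemma collapse_subset (K τ : Set (Fin n → ℝ)) : collapse K τ ⊆ K :=
  sUnion_subset fun _ hγ => hγ.2.1

lemma toR_notMem_collapse (K : Set (Fin n → ℝ)) (τ : Fin n → ℤ) :
    toR τ ∉ collapse K (cube τ 0) := by
  rintro ⟨γ, ⟨-, -, hτγ⟩, hτ⟩
  exact hτγ (cube_zero_subset_iff.2 hτ)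

lemma mem_pastlk_collapse_iff {τ v j : Fin n → ℤ} :
    j ∈ pastlk (collapse K (cube τ 0)) v ↔ j ∈ pastlk K v ∧ toR τ ∉ cube v j := by
  constructor
  · rintro ⟨hj, hj0, hjK⟩
    exact ⟨⟨hj, hj0, hjK.trans (collapse_subset _ _)⟩,
      fun hτ => toR_notMem_collapse K τ (hjK hτ)⟩
  · rintro ⟨⟨hj, hj0, hjK⟩, hτ⟩
    exact ⟨hj, hj0, subset_sUnion_of_mem ⟨⟨v, j, hj, rfl⟩, hjK, mt cube_zero_subset_iff.1 hτ⟩⟩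

lemma le_sub_min_of_mem_pastlk {vσ jσ τ v j : Fin n → ℤ}
    (hfree : IsFreeFace K (cube τ 0) (cube vσ jσ)) (hτv : τ ≤ v) (hj : j ∈ pastlk K v)
    (hτj : v - τ ≤ j) : j ≤ v - (vσ - jσ) := by
  have hτ : toR τ ∈ cube v j := toR_mem_cube.2 ⟨sub_le_comm.1 hτj, hτv⟩
  have hσ := hfree.subset_of_subset ⟨v, j, hj.1, rfl⟩ hj.2.2 (cube_zero_subset_iff.2 hτ)
  exact le_sub_comm.1 ((cube_subset_cube_iff (isBinary_iff.1 hj.1).1).1 hσ).1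

end PastLink

theorem statement11_general (n : ℕ) (K : Set (Fin n → ℝ))
    (vσ jσ : Fin n → ℤ) (hjσ : IsBinary jσ) (hσK : cube vσ jσ ⊆ K)
    (τ v : Fin n → ℤ)
    (hτ1 : vσ - jσ ≤ τ)
    (hv1 : vσ - jσ ≤ v) (hv2 : v ≤ vσ)
    (hτv : τ ≤ v) (hvτ : v ≠ τ) (hτmin : τ ≠ vσ - jσ)
    (hfree : IsFreeFace K (cube τ 0) (cube vσ jσ)) :
    ((v - τ) ∈ pastlk K v ∧ (v - (vσ - jσ)) ∈ pastlk K v ∧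
      (∀ j ∈ pastlk K v, v - τ ≤ j → j ≤ v - (vσ - jσ))) ∧
    pastlk (collapse K (cube τ 0)) v
      = pastlk K v \
          {j | IsBinary j ∧ j ≠ 0 ∧ v - τ ≤ j ∧ j ≤ v - (vσ - jσ)} := by
  have hvmin : v ≠ vσ - jσ := fun h => hτmin (le_antisymm (h ▸ hτv) hτ1)
  have hcoface : ∀ j ∈ pastlk K v, v - τ ≤ j → j ≤ v - (vσ - jσ) :=
    fun _ hj hτj => le_sub_min_of_mem_pastlk hfree hτv hj hτj
  refine ⟨⟨sub_mem_pastlk hjσ hσK hτ1 hτv hv2 hvτ,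
    sub_mem_pastlk hjσ hσK le_rfl hv1 hv2 hvmin, hcoface⟩, ?_⟩
  ext j
  rw [mem_pastlk_collapse_iff, mem_sdiff, toR_mem_cube, sub_le_comm]
  refine and_congr_right fun hj => not_congr ⟨fun hτj => ?_, fun h => ⟨h.2.2.1, hτv⟩⟩
  exact ⟨hj.1, hj.2.1, hτj.1, hcoface j hj hτj.1⟩

theorem statement11 (n : ℕ) (hn : 0 < n) (K : Set (Fin n → ℝ)) (hK : IsComplex K)
    (vσ jσ : Fin n → ℤ) (hjσ : IsBinary jσ) (hσK : cube vσ jσ ⊆ K)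
    (τ v : Fin n → ℤ)
    (hτ1 : vσ - jσ ≤ τ) (hτ2 : τ ≤ vσ)
    (hv1 : vσ - jσ ≤ v) (hv2 : v ≤ vσ)
    (hτv : τ ≤ v) (hvτ : v ≠ τ) (hτmin : τ ≠ vσ - jσ)
    (hfree : IsFreeFace K (cube τ 0) (cube vσ jσ)) :
    ((v - τ) ∈ pastlk K v ∧ (v - (vσ - jσ)) ∈ pastlk K v ∧
      (∀ j ∈ pastlk K v, v - τ ≤ j → j ≤ v - (vσ - jσ))) ∧
    pastlk (collapse K (cube τ 0)) v
      = pastlk K v \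
          {j | IsBinary j ∧ j ≠ 0 ∧ v - τ ≤ j ∧ j ≤ v - (vσ - jσ)} :=
  statement11_general n K vσ jσ hjσ hσK τ v hτ1 hv1 hv2 hτv hvτ hτmin hfree

end DCC
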